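/- arXiv:1102.0942 — 2 statements merged into one kernel-verified Lean document; each statement's English description precedes it below -/
import Mathlib

section
/- Let ‖·‖†_ρ denote the weighted L¹-Fourier norm ‖ℱ‖†_ρ = max_{ℏ∈[0,1]} ∫ |ℱ̂(t;ℏ)| e^{ρ|t|} dλ(t) on symbols over ℝ^l × 𝕋^l. If ℱ, 𝒢 have finite norms with ‖ℱ‖†_ρ, ‖𝒢‖†_{ρ−d} < ∞ and 0 < d + d₁ < ρ, then the Moyal bracket satisfies ‖{ℱ,𝒢}_M‖†_{ρ−d−d₁} ≤ (1/(e² d₁ (d+d₁))) · ‖ℱ‖†_ρ · ‖𝒢‖†_{ρ−d}. -/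
open MeasureTheory

noncomputable section

/-- The measure `dλ(p,s) = dp ⊗ ∑_{q∈ℤ^l} δ_q(s)` on `ℝ × ℝ^l` carrying the
Fourier data of symbols on `ℝ^l × 𝕋^l` (in the `ω`-restricted calculus). -/
def fourierMeasure (l : ℕ) : Measure (ℝ × (Fin l → ℝ)) :=
  (volume : Measure ℝ).prod
    (Measure.sum fun q : Fin l → ℤ => Measure.dirac fun i => (q i : ℝ))

/-- `|t| = |p| + |s|` for `t = (p,s) ∈ ℝ × ℝ^l`. -/
def tAbs (l : ℕ) (t : ℝ × (Fin l → ℝ)) : ℝ :=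
  |t.1| + Real.sqrt (∑ i, t.2 i ^ 2)

/-- Twisted symplectic pairing `Ω_ω(t,t') = ⟨p·ω,s'⟩ - ⟨s,p'·ω⟩`. -/
def OmegaPair (l : ℕ) (ω : Fin l → ℝ) (t t' : ℝ × (Fin l → ℝ)) : ℝ :=
  t.1 * (∑ i, ω i * t'.2 i) - (∑ i, t.2 i * ω i) * t'.1

/-- Weighted `L¹`-Fourier norm `‖F‖†_σ = ∫ |F(t)| e^{σ|t|} dλ(t)`. -/
def wNorm (l : ℕ) (σ : ℝ) (F : ℝ × (Fin l → ℝ) → ℂ) : ℝ :=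
  ∫ t, ‖F t‖ * Real.exp (σ * tAbs l t) ∂(fourierMeasure l)

/-- Fourier data of the Moyal bracket `{ℱ,𝒢}_M`:
`(1/ℏ) ∫ F(t'-t) G(t') sin(ℏ Ω_ω(t'-t,t')/2) dλ(t')`. -/
def moyalData (l : ℕ) (ω : Fin l → ℝ) (ℏ : ℝ) (F G : ℝ × (Fin l → ℝ) → ℂ) :
    ℝ × (Fin l → ℝ) → ℂ := fun t =>
  (1 / ℏ : ℝ) • ∫ t', F (t' - t) * G t' *
    (Real.sin (ℏ * OmegaPair l ω (t' - t) t' / 2) : ℝ) ∂(fourierMeasure l)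

/-!
`fourierMeasure l` is the image of the Haar measure of the group `ℝ × ℤ^l` under its inclusion
into `ℝ × ℝ^l`, so the Moyal bracket is a twisted convolution on a group with an invariant
measure. Pointwise, `|sin(ℏΩ/2)|/ℏ ≤ |Ω|/2 ≤ |t' - t| |t'|`; the weight `e^{(ρ-d-d₁)|t|}` is
split by the triangle inequality `|t| ≤ |t' - t| + |t'|`, and the factors `|t' - t|`, `|t'|` are
absorbed into `e^{-(d+d₁)|t'-t|}` and `e^{-d₁|t'|}` through `α e^{-δα} ≤ 1/(eδ)`. The bracket's
weighted integrand is thus dominated by `C Φ(t' - t) Ψ(t')`, where `Φ = |F| e^{ρ|·|}` and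
`Ψ = |G| e^{(ρ-d)|·|}`, and the double integral of that is `C ‖Φ‖₁ ‖Ψ‖₁` by Tonelli and
translation invariance.
-/

open scoped ENNReal

theorem ofReal_norm_integral_mul_mul_le {X A : Type*} [MeasurableSpace X] {μ : Measure X}
    [NormedRing A] [NormedSpace ℝ A] {f g k : X → A} {a b : X → ℝ} {w C : ℝ}
    (hC : 0 ≤ C) (hw : 0 ≤ w) (ha : ∀ x, 0 ≤ a x) (hk : ∀ x, w * ‖k x‖ ≤ C * a x * b x) :
    ENNReal.ofReal (‖∫ x, f x * g x * k x ∂μ‖ * w) ≤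
      ENNReal.ofReal C * ∫⁻ x, ENNReal.ofReal (‖f x‖ * a x) * ENNReal.ofReal (‖g x‖ * b x) ∂μ := by
  have hpointwise (x : X) : ENNReal.ofReal (‖f x * g x * k x‖ * w) ≤
      ENNReal.ofReal C * (ENNReal.ofReal (‖f x‖ * a x) * ENNReal.ofReal (‖g x‖ * b x)) := by
    rw [← ENNReal.ofReal_mul (mul_nonneg (norm_nonneg _) (ha x)), ← ENNReal.ofReal_mul hC]
    refine ENNReal.ofReal_le_ofReal ?_
    calc ‖f x * g x * k x‖ * w ≤ ‖f x‖ * ‖g x‖ * (w * ‖k x‖) := by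
          nlinarith [norm_mul₃_le (a := f x) (b := g x) (c := k x)]
      _ ≤ ‖f x‖ * ‖g x‖ * (C * a x * b x) :=
          mul_le_mul_of_nonneg_left (hk x) (by positivity)
      _ = C * (‖f x‖ * a x * (‖g x‖ * b x)) := by ring
  calc ENNReal.ofReal (‖∫ x, f x * g x * k x ∂μ‖ * w)
      = ‖∫ x, f x * g x * k x ∂μ‖ₑ * ENNReal.ofReal w := by
        rw [ENNReal.ofReal_mul (norm_nonneg _), ofReal_norm]
    _ ≤ (∫⁻ x, ‖f x * g x * k x‖ₑ ∂μ) * ENNReal.ofReal w := by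
        gcongr; exact enorm_integral_le_lintegral_enorm _
    _ = ∫⁻ x, ENNReal.ofReal (‖f x * g x * k x‖ * w) ∂μ := by
        rw [← lintegral_mul_const' _ _ ENNReal.ofReal_ne_top]
        simp only [ENNReal.ofReal_mul (norm_nonneg _), ofReal_norm]
    _ ≤ ∫⁻ x, ENNReal.ofReal C *
          (ENNReal.ofReal (‖f x‖ * a x) * ENNReal.ofReal (‖g x‖ * b x)) ∂μ :=
        lintegral_mono hpointwise
    _ = _ := lintegral_const_mul' _ _ ENNReal.ofReal_ne_top

section Convolution

variable {K : Type*} [AddCommGroup K] [MeasurableSpace K] [MeasurableAdd₂ K]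
  {ν : Measure K} [SFinite ν] [ν.IsAddLeftInvariant]

theorem lintegral_lintegral_sub_mul {Φ Ψ : K → ℝ≥0∞} (hΦ : AEMeasurable Φ ν)
    (hΨ : AEMeasurable Ψ ν) :
    ∫⁻ t, ∫⁻ t', Φ (t' - t) * Ψ t' ∂ν ∂ν = (∫⁻ t, Φ t ∂ν) * ∫⁻ t, Ψ t ∂ν :=
  calc ∫⁻ t, ∫⁻ t', Φ (t' - t) * Ψ t' ∂ν ∂ν
      = ∫⁻ t, ∫⁻ s, Φ s * Ψ (t + s) ∂ν ∂ν := by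
        refine lintegral_congr fun t => ?_
        rw [← lintegral_add_left_eq_self _ t]
        simp only [add_sub_cancel_left]
    _ = ∫⁻ s, ∫⁻ t, Φ s * Ψ (s + t) ∂ν ∂ν := by
        rw [lintegral_lintegral_swap (by fun_prop)]
        simp only [add_comm]
    _ = ∫⁻ s, Φ s * ∫⁻ t, Ψ t ∂ν ∂ν := by
        refine lintegral_congr fun s => ?_
        rw [lintegral_add_left_eq_self (fun t => Φ s * Ψ t) s, lintegral_const_mul'' _ hΨ]
    _ = (∫⁻ t, Φ t ∂ν) * ∫⁻ t, Ψ t ∂ν := lintegral_mul_const'' _ hΦ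

theorem integral_norm_integral_mul_mul_le {A : Type*} [NormedRing A] [NormedSpace ℝ A]
    {f g : K → A} {k : K → K → A} {w a b : K → ℝ} {C : ℝ} (hC : 0 ≤ C)
    (hw : ∀ t, 0 ≤ w t) (ha : ∀ t, 0 ≤ a t) (hb : ∀ t, 0 ≤ b t)
    (hk : ∀ t t', w t * ‖k t t'‖ ≤ C * a (t' - t) * b t')
    (hf : Integrable (fun t => ‖f t‖ * a t) ν) (hg : Integrable (fun t => ‖g t‖ * b t) ν) :
    ∫ t, ‖∫ t', f (t' - t) * g t' * k t t' ∂ν‖ * w t ∂ν ≤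
      C * (∫ t, ‖f t‖ * a t ∂ν) * ∫ t, ‖g t‖ * b t ∂ν := by
  have hfa : 0 ≤ ∫ t, ‖f t‖ * a t ∂ν := integral_nonneg fun t => mul_nonneg (norm_nonneg _) (ha t)
  have hgb : 0 ≤ ∫ t, ‖g t‖ * b t ∂ν := integral_nonneg fun t => mul_nonneg (norm_nonneg _) (hb t)
  have hlint : ∫⁻ t, ENNReal.ofReal (‖∫ t', f (t' - t) * g t' * k t t' ∂ν‖ * w t) ∂ν ≤
      ENNReal.ofReal (C * (∫ t, ‖f t‖ * a t ∂ν) * ∫ t, ‖g t‖ * b t ∂ν) := by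
    rw [ENNReal.ofReal_mul (mul_nonneg hC hfa), ENNReal.ofReal_mul hC,
      ofReal_integral_eq_lintegral_ofReal hf (.of_forall fun t => mul_nonneg (norm_nonneg _) (ha t)),
      ofReal_integral_eq_lintegral_ofReal hg (.of_forall fun t => mul_nonneg (norm_nonneg _) (hb t)),
      mul_assoc, ← lintegral_lintegral_sub_mul hf.1.aemeasurable.ennreal_ofReal
        hg.1.aemeasurable.ennreal_ofReal, ← lintegral_const_mul' _ _ ENNReal.ofReal_ne_top]
    exact lintegral_mono fun t =>
      ofReal_norm_integral_mul_mul_le hC (hw t) (fun t' => ha (t' - t)) (hk t)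
  calc ∫ t, ‖∫ t', f (t' - t) * g t' * k t t' ∂ν‖ * w t ∂ν
      ≤ ‖∫ t, ‖∫ t', f (t' - t) * g t' * k t t' ∂ν‖ * w t ∂ν‖ := Real.le_norm_self _
    _ ≤ (∫⁻ t, ENNReal.ofReal (‖∫ t', f (t' - t) * g t' * k t t' ∂ν‖ * w t) ∂ν).toReal := by
        refine (norm_integral_le_lintegral_norm _).trans_eq ?_
        simp only [Real.norm_of_nonneg (mul_nonneg (norm_nonneg _) (hw _))]
    _ ≤ C * (∫ t, ‖f t‖ * a t ∂ν) * ∫ t, ‖g t‖ * b t ∂ν :=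
        ENNReal.toReal_le_of_le_ofReal (mul_nonneg (mul_nonneg hC hfa) hgb) hlint

end Convolution

abbrev latticeMeasure (l : ℕ) : Measure (ℝ × (Fin l → ℤ)) :=
  (volume : Measure ℝ).prod Measure.count

def latticeIncl (l : ℕ) : ℝ × (Fin l → ℤ) →+ ℝ × (Fin l → ℝ) :=
  (AddMonoidHom.id ℝ).prodMap ((Int.castAddHom ℝ).compLeft (Fin l))

theorem measurableEmbedding_intCast_pi (l : ℕ) :
    MeasurableEmbedding fun (q : Fin l → ℤ) (i : Fin l) => (q i : ℝ) where
  injective _ _ h := funext fun i => by simpa using congrFun h i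
  measurable := measurable_of_countable _
  measurableSet_image' s _ := (s.to_countable.image _).measurableSet

theorem measurableEmbedding_latticeIncl (l : ℕ) : MeasurableEmbedding (latticeIncl l) :=
  MeasurableEmbedding.id.prodMap (measurableEmbedding_intCast_pi l)

theorem coe_latticeIncl (l : ℕ) :
    ⇑(latticeIncl l) = Prod.map id fun (q : Fin l → ℤ) (i : Fin l) => (q i : ℝ) := rfl

theorem fourierMeasure_eq_map (l : ℕ) :
    fourierMeasure l = (latticeMeasure l).map (latticeIncl l) := by
  have hcast := (measurableEmbedding_intCast_pi l).measurable
  rw [fourierMeasure, coe_latticeIncl, ← Measure.map_prod_map _ _ measurable_id hcast, Measure.map_id,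
    Measure.count, Measure.map_sum hcast.aemeasurable]
  simp only [Measure.map_dirac' hcast]

theorem tAbs_eq_norm (l : ℕ) (t : ℝ × (Fin l → ℝ)) :
    tAbs l t = ‖t.1‖ + ‖WithLp.toLp 2 t.2‖ := by
  simp [tAbs, EuclideanSpace.norm_eq, Real.norm_eq_abs, sq_abs]

theorem tAbs_nonneg (l : ℕ) (t : ℝ × (Fin l → ℝ)) : 0 ≤ tAbs l t := by
  rw [tAbs_eq_norm]; positivity

theorem tAbs_sub_le (l : ℕ) (t t' : ℝ × (Fin l → ℝ)) : tAbs l (t - t') ≤ tAbs l t + tAbs l t' := by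
  simp only [tAbs_eq_norm, Prod.fst_sub, Prod.snd_sub, WithLp.toLp_sub]
  linarith [norm_sub_le t.1 t'.1, norm_sub_le (WithLp.toLp 2 t.2) (WithLp.toLp 2 t'.2)]

theorem abs_sum_mul_le_norm {l : ℕ} {ω : Fin l → ℝ} (hω : ∑ i, |ω i| ≤ 1) (s : Fin l → ℝ) :
    |∑ i, ω i * s i| ≤ ‖WithLp.toLp 2 s‖ :=
  calc |∑ i, ω i * s i| ≤ ∑ i, |ω i| * |s i| := by
        simpa only [abs_mul] using Finset.abs_sum_le_sum_abs (fun i => ω i * s i) Finset.univ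
    _ ≤ ∑ i, |ω i| * ‖WithLp.toLp 2 s‖ := by
        gcongr with i
        simpa using PiLp.norm_apply_le (WithLp.toLp 2 s) i
    _ = (∑ i, |ω i|) * ‖WithLp.toLp 2 s‖ := by rw [Finset.sum_mul]
    _ ≤ ‖WithLp.toLp 2 s‖ := mul_le_of_le_one_left (norm_nonneg _) hω

theorem abs_omegaPair_le {l : ℕ} {ω : Fin l → ℝ} (hω : ∑ i, |ω i| ≤ 1)
    (t t' : ℝ × (Fin l → ℝ)) : |OmegaPair l ω t t'| ≤ tAbs l t * tAbs l t' := by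
  have h₁ := abs_sum_mul_le_norm hω t'.2
  have h₂ : |∑ i, t.2 i * ω i| ≤ ‖WithLp.toLp 2 t.2‖ := by
    simpa only [mul_comm] using abs_sum_mul_le_norm hω t.2
  rw [OmegaPair, tAbs_eq_norm, tAbs_eq_norm, Real.norm_eq_abs, Real.norm_eq_abs]
  calc |t.1 * (∑ i, ω i * t'.2 i) - (∑ i, t.2 i * ω i) * t'.1|
      ≤ |t.1| * |∑ i, ω i * t'.2 i| + |∑ i, t.2 i * ω i| * |t'.1| := by
        simpa only [abs_mul] using
          abs_sub (t.1 * ∑ i, ω i * t'.2 i) ((∑ i, t.2 i * ω i) * t'.1)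
    _ ≤ |t.1| * ‖WithLp.toLp 2 t'.2‖ + ‖WithLp.toLp 2 t.2‖ * |t'.1| := by gcongr
    _ ≤ (|t.1| + ‖WithLp.toLp 2 t.2‖) * (|t'.1| + ‖WithLp.toLp 2 t'.2‖) := by
        nlinarith [abs_nonneg t.1, abs_nonneg t'.1, norm_nonneg (WithLp.toLp 2 t.2),
          norm_nonneg (WithLp.toLp 2 t'.2)]

theorem mul_exp_neg_mul_le {δ : ℝ} (hδ : 0 < δ) (x : ℝ) :
    x * Real.exp (-(δ * x)) ≤ (Real.exp 1 * δ)⁻¹ := by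
  have h : δ * x * Real.exp (-(δ * x)) ≤ Real.exp (-1) :=
    calc δ * x * Real.exp (-(δ * x)) ≤ Real.exp (δ * x - 1) * Real.exp (-(δ * x)) := by
          gcongr; linarith [Real.add_one_le_exp (δ * x - 1)]
      _ = Real.exp (-1) := by rw [← Real.exp_add]; ring_nf
  rw [Real.exp_neg 1] at h
  rw [mul_inv, le_mul_inv_iff₀ hδ]
  linarith

theorem inv_mul_abs_sin_le {ℏ : ℝ} (hℏ : 0 < ℏ) (x : ℝ) :
    1 / ℏ * |Real.sin (ℏ * x / 2)| ≤ |x| / 2 := by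
  rw [div_mul_eq_mul_div, one_mul, div_le_iff₀ hℏ]
  calc |Real.sin (ℏ * x / 2)| ≤ |ℏ * x / 2| := Real.abs_sin_le_abs
    _ = |x| / 2 * ℏ := by rw [abs_div, abs_mul, abs_of_pos hℏ, abs_two]; ring

theorem mul_mul_exp_le {A B ρ d d₁ : ℝ} (hB : 0 ≤ B) (hd₁ : 0 < d₁)
    (hdd₁ : 0 < d + d₁) :
    A * B * Real.exp ((ρ - d - d₁) * (A + B)) ≤
      1 / (Real.exp 1 ^ 2 * d₁ * (d + d₁)) * Real.exp (ρ * A) * Real.exp ((ρ - d) * B) := by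
  have hexp : Real.exp ((ρ - d - d₁) * (A + B)) = Real.exp (-((d + d₁) * A)) *
      Real.exp (-(d₁ * B)) * (Real.exp (ρ * A) * Real.exp ((ρ - d) * B)) := by
    simp only [← Real.exp_add]; ring_nf
  calc A * B * Real.exp ((ρ - d - d₁) * (A + B))
      = A * Real.exp (-((d + d₁) * A)) * (B * Real.exp (-(d₁ * B))) *
          (Real.exp (ρ * A) * Real.exp ((ρ - d) * B)) := by
        rw [hexp]; ring
    _ ≤ (Real.exp 1 * (d + d₁))⁻¹ * (Real.exp 1 * d₁)⁻¹ *
          (Real.exp (ρ * A) * Real.exp ((ρ - d) * B)) := by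
        gcongr
        · exact mul_exp_neg_mul_le hdd₁ A
        · exact mul_exp_neg_mul_le hd₁ B
    _ = 1 / (Real.exp 1 ^ 2 * d₁ * (d + d₁)) * Real.exp (ρ * A) * Real.exp ((ρ - d) * B) := by
        field_simp

theorem moyal_kernel_bound {l : ℕ} {ω : Fin l → ℝ} (hω : ∑ i, |ω i| ≤ 1) {ℏ : ℝ} (hℏ : 0 < ℏ)
    {ρ d d₁ : ℝ} (hd₁ : 0 < d₁) (hdd₁ : 0 < d + d₁) (hρ : d + d₁ ≤ ρ)
    (t t' : ℝ × (Fin l → ℝ)) :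
    1 / ℏ * Real.exp ((ρ - d - d₁) * tAbs l t) * |Real.sin (ℏ * OmegaPair l ω (t' - t) t' / 2)| ≤
      1 / (Real.exp 1 ^ 2 * d₁ * (d + d₁)) * Real.exp (ρ * tAbs l (t' - t)) *
        Real.exp ((ρ - d) * tAbs l t') := by
  have hA := tAbs_nonneg l (t' - t)
  have hB := tAbs_nonneg l t'
  have hsin : 1 / ℏ * |Real.sin (ℏ * OmegaPair l ω (t' - t) t' / 2)| ≤
      tAbs l (t' - t) * tAbs l t' := by
    linarith [inv_mul_abs_sin_le hℏ (OmegaPair l ω (t' - t) t'), abs_omegaPair_le hω (t' - t) t',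
      mul_nonneg hA hB]
  have htri : tAbs l t ≤ tAbs l (t' - t) + tAbs l t' := by
    simpa [add_comm] using tAbs_sub_le l t' (t' - t)
  calc 1 / ℏ * Real.exp ((ρ - d - d₁) * tAbs l t) *
        |Real.sin (ℏ * OmegaPair l ω (t' - t) t' / 2)|
      = Real.exp ((ρ - d - d₁) * tAbs l t) *
          (1 / ℏ * |Real.sin (ℏ * OmegaPair l ω (t' - t) t' / 2)|) := by ring
    _ ≤ Real.exp ((ρ - d - d₁) * (tAbs l (t' - t) + tAbs l t')) *
          (tAbs l (t' - t) * tAbs l t') := by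
        gcongr
        linarith
    _ ≤ _ := by rw [mul_comm]; exact mul_mul_exp_le hB hd₁ hdd₁

theorem wNorm_eq_integral_latticeIncl (l : ℕ) (σ : ℝ) (F : ℝ × (Fin l → ℝ) → ℂ) :
    wNorm l σ F = ∫ s, ‖F (latticeIncl l s)‖ * Real.exp (σ * tAbs l (latticeIncl l s))
      ∂latticeMeasure l := by
  rw [wNorm, fourierMeasure_eq_map, (measurableEmbedding_latticeIncl l).integral_map]

theorem wNorm_moyalData_eq (l : ℕ) (ω : Fin l → ℝ) {ℏ : ℝ} (hℏ : 0 ≤ ℏ) (σ : ℝ)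
    (F G : ℝ × (Fin l → ℝ) → ℂ) :
    wNorm l σ (moyalData l ω ℏ F G) = ∫ s, ‖∫ s', F (latticeIncl l (s' - s)) *
        G (latticeIncl l s') *
        (Real.sin (ℏ * OmegaPair l ω (latticeIncl l (s' - s)) (latticeIncl l s') / 2) : ℝ)
        ∂latticeMeasure l‖ * (1 / ℏ * Real.exp (σ * tAbs l (latticeIncl l s)))
      ∂latticeMeasure l := by
  rw [wNorm_eq_integral_latticeIncl]
  refine integral_congr_ae (.of_forall fun s => ?_)
  simp only [moyalData, fourierMeasure_eq_map, (measurableEmbedding_latticeIncl l).integral_map,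
    map_sub, norm_smul, Real.norm_of_nonneg (one_div_nonneg.2 hℏ)]
  ring

theorem moyal_bracket_norm_bound_general (l : ℕ)
    (ω : Fin l → ℝ) (hω : (∑ i, |ω i|) ≤ 1)
    (ℏ : ℝ) (hℏ : ℏ ∈ Set.Ioc (0 : ℝ) 1)
    (ρ d d₁ : ℝ) (hd : 0 < d) (hd₁ : 0 < d₁) (hρ : d + d₁ < ρ)
    (F G : ℝ × (Fin l → ℝ) → ℂ)
    (hF : Integrable (fun t => ‖F t‖ * Real.exp (ρ * tAbs l t)) (fourierMeasure l))
    (hG : Integrable (fun t => ‖G t‖ * Real.exp ((ρ - d) * tAbs l t)) (fourierMeasure l)) :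
    wNorm l (ρ - d - d₁) (moyalData l ω ℏ F G) ≤
      (1 / (Real.exp 1 ^ 2 * d₁ * (d + d₁))) * wNorm l ρ F * wNorm l (ρ - d) G := by
  obtain ⟨hℏ, -⟩ := hℏ
  rw [fourierMeasure_eq_map, (measurableEmbedding_latticeIncl l).integrable_map_iff] at hF hG
  rw [wNorm_moyalData_eq l ω hℏ.le, wNorm_eq_integral_latticeIncl, wNorm_eq_integral_latticeIncl]
  refine integral_norm_integral_mul_mul_le (f := F ∘ latticeIncl l) (g := G ∘ latticeIncl l)
    (a := fun s => Real.exp (ρ * tAbs l (latticeIncl l s)))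
    (b := fun s => Real.exp ((ρ - d) * tAbs l (latticeIncl l s))) (by positivity)
    (fun _ => by positivity) (fun _ => by positivity) (fun _ => by positivity) (fun s s' => ?_)
    hF hG
  simpa only [map_sub, Complex.norm_real, Real.norm_eq_abs] using
    moyal_kernel_bound hω hℏ hd₁ (by linarith) hρ.le (latticeIncl l s) (latticeIncl l s')

/-- Moyal bracket estimate in weighted Fourier norms:
`‖{ℱ,𝒢}_M‖†_{ρ-d-d₁} ≤ (1/(e² d₁ (d+d₁))) ‖ℱ‖†_ρ ‖𝒢‖†_{ρ-d}`. -/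
theorem moyal_bracket_norm_bound (l : ℕ) (hl : 1 ≤ l)
    (ω : Fin l → ℝ) (hω : (∑ i, |ω i|) ≤ 1)
    (ℏ : ℝ) (hℏ : ℏ ∈ Set.Ioc (0 : ℝ) 1)
    (ρ d d₁ : ℝ) (hd : 0 < d) (hd₁ : 0 < d₁) (hρ : d + d₁ < ρ)
    (F G : ℝ × (Fin l → ℝ) → ℂ)
    (hF : Integrable (fun t => ‖F t‖ * Real.exp (ρ * tAbs l t)) (fourierMeasure l))
    (hG : Integrable (fun t => ‖G t‖ * Real.exp ((ρ - d) * tAbs l t)) (fourierMeasure l)) :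
    wNorm l (ρ - d - d₁) (moyalData l ω ℏ F G) ≤
      (1 / (Real.exp 1 ^ 2 * d₁ * (d + d₁))) * wNorm l ρ F * wNorm l (ρ - d) G :=
  moyal_bracket_norm_bound_general l ω hω ℏ hℏ ρ d d₁ hd hd₁ hρ F G hF hG
end
end

section
/- Let μ > 1, v₀ > 0 and suppose a sequence (v_ℓ) of nonnegative reals satisfies v_{ℓ+1} ≤ Φ_ℓ v_ℓ² with Φ_ℓ ≤ ν (ℓ+1)^{6+4τ} for some 0 < ν ≤ 1 and τ > 1. Then for all ℓ, v_ℓ ≤ (e^{8(3+2τ)} v₀)^{2^ℓ}. In particular, if |ε| e^{24(3+2τ)} v₀ < 1, then ε^{2^ℓ} v_ℓ ≤ (ε μ³ v₀)^{2^ℓ} → 0 super-exponentially as ℓ → ∞, where μ = e^{8(3+2τ)}. -/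
/-!
Since `(ℓ + 1)^c ≤ e^{cℓ}`, the recursion gives `v_{ℓ+1} ≤ a^ℓ v_ℓ²` with `a = e^{6+4τ}`.
The rescaled sequence `a^{ℓ+1} v_ℓ` then obeys the pure squaring recursion `w_{ℓ+1} ≤ w_ℓ²`,
so `v_ℓ ≤ a^{ℓ+1} v_ℓ ≤ (a v₀)^{2^ℓ}`, and `a ≤ e^{8(3+2τ)} ≤ e^{24(3+2τ)}`.
-/

open Filter Real

theorem le_pow_two_pow_of_le_sq {w : ℕ → ℝ} (hw : ∀ n, 0 ≤ w n)
    (h : ∀ n, w (n + 1) ≤ w n ^ 2) (n : ℕ) : w n ≤ w 0 ^ 2 ^ n := by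
  induction n with
  | zero => simp
  | succ n ih =>
    calc w (n + 1) ≤ w n ^ 2 := h n
      _ ≤ (w 0 ^ 2 ^ n) ^ 2 := pow_le_pow_left₀ (hw n) ih 2
      _ = w 0 ^ 2 ^ (n + 1) := by rw [← pow_mul, pow_succ]

theorem le_pow_two_pow_of_le_pow_mul_sq {a : ℝ} (ha : 1 ≤ a) {v : ℕ → ℝ} (hv : ∀ n, 0 ≤ v n)
    (h : ∀ n, v (n + 1) ≤ a ^ n * v n ^ 2) (n : ℕ) : v n ≤ (a * v 0) ^ 2 ^ n := by
  have ha0 : 0 ≤ a := zero_le_one.trans ha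
  have hsq : ∀ n, a ^ (n + 1 + 1) * v (n + 1) ≤ (a ^ (n + 1) * v n) ^ 2 := fun n =>
    calc a ^ (n + 1 + 1) * v (n + 1) ≤ a ^ (n + 1 + 1) * (a ^ n * v n ^ 2) :=
          mul_le_mul_of_nonneg_left (h n) (pow_nonneg ha0 _)
      _ = (a ^ (n + 1) * v n) ^ 2 := by ring
  calc v n ≤ a ^ (n + 1) * v n := le_mul_of_one_le_left (hv n) (one_le_pow₀ ha)
    _ ≤ (a ^ (0 + 1) * v 0) ^ 2 ^ n :=
      le_pow_two_pow_of_le_sq (w := fun n => a ^ (n + 1) * v n)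
        (fun n => mul_nonneg (pow_nonneg ha0 _) (hv n)) hsq n
    _ = (a * v 0) ^ 2 ^ n := by rw [zero_add, pow_one]

theorem natCast_add_one_rpow_le_exp_pow {c : ℝ} (hc : 0 ≤ c) (n : ℕ) :
    ((n : ℝ) + 1) ^ c ≤ exp c ^ n := by
  calc ((n : ℝ) + 1) ^ c ≤ exp n ^ c :=
        rpow_le_rpow (by positivity) (add_one_le_exp _) hc
    _ = exp c ^ n := by rw [← exp_mul, ← exp_nat_mul, mul_comm]

theorem kam_quadratic_convergence_general (τ ν : ℝ) (hτ : 1 < τ) (hν1 : ν ≤ 1)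
    (v Φ : ℕ → ℝ) (hv : ∀ ℓ, 0 ≤ v ℓ)
    (hΦ : ∀ ℓ, Φ ℓ ≤ ν * ((ℓ : ℝ) + 1) ^ (6 + 4 * τ))
    (hrec : ∀ ℓ, v (ℓ + 1) ≤ Φ ℓ * (v ℓ) ^ 2) :
    (∀ ℓ, v ℓ ≤ (Real.exp (8 * (3 + 2 * τ)) * v 0) ^ (2 ^ ℓ)) ∧
    (∀ ε : ℝ, |ε| * Real.exp (24 * (3 + 2 * τ)) * v 0 < 1 →
      (∀ ℓ, |ε| ^ (2 ^ ℓ) * v ℓ ≤ (|ε| * Real.exp (24 * (3 + 2 * τ)) * v 0) ^ (2 ^ ℓ)) ∧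
      Tendsto (fun ℓ => |ε| ^ (2 ^ ℓ) * v ℓ) atTop (nhds 0)) := by
  have hc : 0 ≤ 6 + 4 * τ := by linarith
  have hΦ_le : ∀ ℓ, Φ ℓ ≤ exp (6 + 4 * τ) ^ ℓ := fun ℓ =>
    (hΦ ℓ).trans <| (mul_le_of_le_one_left (by positivity) hν1).trans
      (natCast_add_one_rpow_le_exp_pow hc ℓ)
  have hbound : ∀ ℓ, v ℓ ≤ (exp (8 * (3 + 2 * τ)) * v 0) ^ 2 ^ ℓ := fun ℓ =>
    (le_pow_two_pow_of_le_pow_mul_sq (one_le_exp hc) hv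
      (fun n => (hrec n).trans (mul_le_mul_of_nonneg_right (hΦ_le n) (sq_nonneg _))) ℓ).trans
      (pow_le_pow_left₀ (mul_nonneg (exp_pos _).le (hv 0))
        (mul_le_mul_of_nonneg_right (exp_le_exp.2 (by linarith)) (hv 0)) _)
  refine ⟨hbound, fun ε hε => ?_⟩
  have hx0 : 0 ≤ |ε| * exp (24 * (3 + 2 * τ)) * v 0 :=
    mul_nonneg (mul_nonneg (abs_nonneg ε) (exp_pos _).le) (hv 0)
  have hscaled : ∀ ℓ, |ε| ^ 2 ^ ℓ * v ℓ ≤ (|ε| * exp (24 * (3 + 2 * τ)) * v 0) ^ 2 ^ ℓ :=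
    fun ℓ => calc
      |ε| ^ 2 ^ ℓ * v ℓ ≤ (|ε| * exp (8 * (3 + 2 * τ)) * v 0) ^ 2 ^ ℓ := by
        rw [mul_assoc, mul_pow]
        exact mul_le_mul_of_nonneg_left (hbound ℓ) (by positivity)
      _ ≤ (|ε| * exp (24 * (3 + 2 * τ)) * v 0) ^ 2 ^ ℓ :=
        pow_le_pow_left₀ (mul_nonneg (mul_nonneg (abs_nonneg ε) (exp_pos _).le) (hv 0))
          (mul_le_mul_of_nonneg_right
            (mul_le_mul_of_nonneg_left (exp_le_exp.2 (by linarith)) (abs_nonneg ε)) (hv 0)) _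
  exact ⟨hscaled, squeeze_zero (fun ℓ => mul_nonneg (by positivity) (hv ℓ)) hscaled
    ((tendsto_pow_atTop_nhds_zero_of_lt_one hx0 hε).comp
      (tendsto_pow_atTop_atTop_of_one_lt one_lt_two))⟩

/-- Abstract quadratic (Newton/KAM) convergence estimate: if
`v_{ℓ+1} ≤ Φ_ℓ v_ℓ²` with `Φ_ℓ ≤ ν (ℓ+1)^{6+4τ}`, `0 < ν ≤ 1`, `τ > 1`, then
`v_ℓ ≤ (e^{8(3+2τ)} v₀)^{2^ℓ}`; moreover if `|ε| e^{24(3+2τ)} v₀ < 1` then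
`ε^{2^ℓ} v_ℓ ≤ (ε e^{24(3+2τ)} v₀)^{2^ℓ} → 0`. -/
theorem kam_quadratic_convergence (τ ν : ℝ) (hτ : 1 < τ) (hν0 : 0 < ν) (hν1 : ν ≤ 1)
    (v Φ : ℕ → ℝ) (hv : ∀ ℓ, 0 ≤ v ℓ) (hv0 : 0 < v 0)
    (hΦ : ∀ ℓ, Φ ℓ ≤ ν * ((ℓ : ℝ) + 1) ^ (6 + 4 * τ))
    (hrec : ∀ ℓ, v (ℓ + 1) ≤ Φ ℓ * (v ℓ) ^ 2) :
    (∀ ℓ, v ℓ ≤ (Real.exp (8 * (3 + 2 * τ)) * v 0) ^ (2 ^ ℓ)) ∧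
    (∀ ε : ℝ, |ε| * Real.exp (24 * (3 + 2 * τ)) * v 0 < 1 →
      (∀ ℓ, |ε| ^ (2 ^ ℓ) * v ℓ ≤ (|ε| * Real.exp (24 * (3 + 2 * τ)) * v 0) ^ (2 ^ ℓ)) ∧
      Tendsto (fun ℓ => |ε| ^ (2 ^ ℓ) * v ℓ) atTop (nhds 0)) :=
  kam_quadratic_convergence_general τ ν hτ hν1 v Φ hv hΦ hrec
end
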